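/- arXiv:2102.02029 — 2 statements merged into one kernel-verified Lean document; each statement's English description precedes it below -/
import Mathlib

section
/- Let (x_t)_{t≥1} and (v_t)_{t≥1} be sequences in K such that x_1 ∈ V and for every t ≥ 1, with η_t = 2/(t+1): v_t ∈ argmin_{v∈V} ( vᵀ∇f(x_t) + (βη_t/2)‖x_t − v‖² ), and x_{t+1} = (1−η̃_t)x_t + η̃_t v_t for some η̃_t ∈ [0,1] satisfying f(x_{t+1}) ≤ min{ f((1−η_t)x_t + η_t v_t), f(x_t) }. Let D_L be the Euclidean diameter of the initial level set {x ∈ K : f(x) ≤ f(x_1)}. Then for all t ≥ 2: f(x_t) − f* ≤ 2β((D*)² + D_L²)/(t+1). -/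
/-!
Write `h_t = f x_t - f*` and `η_t = 2 / (t + 1)`. The descent lemma for `β`-smooth `f` at
`(1 - η_t) x_t + η_t v_t`, the optimality of `v_t` tested against the points of `S*`, and
convexity of `f` give `h_{t+1} ≤ (1 - η_t) h_t + β η_t² / 2 (‖x_t - x*‖² + D*²)` for a
minimiser `x* ∈ conv S*`: `‖x_t - u‖² - ‖x* - u‖²` is affine in `u` and `‖x* - u‖ ≤ D*` on
`S*`, so the oracle inequality on `S*` is a half-space condition and passes to `x*`. Since `f x_t`
decreases, `x_t` stays in the initial level set, so `‖x_t - x*‖ ≤ D_L`, and the recursion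
solves to `2 β (D*² + D_L²) / (t + 1)`.
-/

open scoped RealInnerProductSpace

section

variable {E : Type*} [NormedAddCommGroup E] [InnerProductSpace ℝ E]

theorem norm_sub_le_of_mem_convexHull {S : Set E} {D : ℝ}
    (hD : ∀ u ∈ S, ∀ w ∈ S, ‖u - w‖ ≤ D) {y u : E} (hy : y ∈ convexHull ℝ S) (hu : u ∈ S) :
    ‖y - u‖ ≤ D := by
  have hS : S ⊆ Metric.closedBall u D := fun w hw => by
    rw [Metric.mem_closedBall, dist_eq_norm]; exact hD w hw u hu
  simpa [dist_eq_norm] using convexHull_min hS (convex_closedBall u D) hy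

theorem le_inner_add_mul_sq_of_mem_convexHull {S : Set E} {D : ℝ}
    (hD : ∀ u ∈ S, ∀ w ∈ S, ‖u - w‖ ≤ D) {a x y : E} (hy : y ∈ convexHull ℝ S) {c q : ℝ}
    (hc : 0 ≤ c) (hq : ∀ u ∈ S, q ≤ ⟪a, u⟫ + c * ‖x - u‖ ^ 2) :
    q ≤ ⟪a, y⟫ + c * (‖x - y‖ ^ 2 + D ^ 2) := by
  -- `‖x - u‖ ^ 2 - ‖y - u‖ ^ 2` is affine in `u`, so the bound is a half-space condition.
  set b := a - (2 * c) • (x - y)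
  set r := q - c * D ^ 2 - c * (‖x‖ ^ 2 - ‖y‖ ^ 2)
  have hb : ∀ u : E,
      ⟪b, u⟫ - r = ⟪a, u⟫ + c * ‖x - u‖ ^ 2 - c * ‖y - u‖ ^ 2 - (q - c * D ^ 2) := by
    intro u
    rw [norm_sub_sq_real, norm_sub_sq_real, inner_sub_left, real_inner_smul_left,
      inner_sub_left]
    ring
  have hS : S ⊆ {u | r ≤ ⟪b, u⟫} := by
    intro u hu
    have hyu : ‖y - u‖ ^ 2 ≤ D ^ 2 :=
      pow_le_pow_left₀ (norm_nonneg _) (norm_sub_le_of_mem_convexHull hD hy hu) 2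
    rw [Set.mem_ofPred_eq, ← sub_nonneg, hb]
    nlinarith [hq u hu]
  have hy' := convexHull_min hS (convex_halfSpace_ge (innerₛₗ ℝ b).isLinear r) hy
  rw [Set.mem_ofPred_eq, ← sub_nonneg, hb, sub_self, norm_zero, zero_pow two_ne_zero,
    mul_zero] at hy'
  linarith

variable [CompleteSpace E] {f : E → ℝ}

theorem HasGradientAt.hasDerivAt_comp_add_smul {a x w : E} {s : ℝ}
    (h : HasGradientAt f a (x + s • w)) :
    HasDerivAt (fun s : ℝ => f (x + s • w)) ⟪a, w⟫ s := by
  have hline : HasDerivAt (fun s : ℝ => x + s • w) w s := by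
    simpa using ((hasDerivAt_id s).smul_const w).const_add x
  exact (hasGradientAt_iff_hasFDerivAt.mp h).comp_hasDerivAt s hline

theorem ConvexOn.inner_gradient_le_sub {a x : E} (hf : ConvexOn ℝ Set.univ f)
    (h : HasGradientAt f a x) (y : E) :
    ⟪a, y - x⟫ ≤ f y - f x := by
  have hline : ConvexOn ℝ Set.univ (fun s : ℝ => f (x + s • (y - x))) := by
    simpa [Function.comp_def, AffineMap.lineMap_apply, add_comm] using
      hf.comp_affineMap (AffineMap.lineMap x y)
  have hderiv : HasDerivAt (fun s : ℝ => f (x + s • (y - x))) ⟪a, y - x⟫ 0 :=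
    HasGradientAt.hasDerivAt_comp_add_smul (by simpa using h)
  simpa [slope_def_field] using
    hline.le_slope_of_hasDerivAt (Set.mem_univ 0) (Set.mem_univ 1) one_pos hderiv

theorem le_add_inner_add_sq_of_lipschitz_gradient {g : E → E} {β : ℝ}
    (hgrad : ∀ z, HasGradientAt f (g z) z) (hg : ∀ x y, ‖g x - g y‖ ≤ β * ‖x - y‖)
    (x y : E) :
    f y ≤ f x + ⟪g x, y - x⟫ + β / 2 * ‖y - x‖ ^ 2 := by
  set w := y - x
  set φ : ℝ → ℝ := fun s => f (x + s • w) - s * ⟪g x, w⟫ - β / 2 * ‖w‖ ^ 2 * s ^ 2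
  have hφ : ∀ s : ℝ, HasDerivAt φ (⟪g (x + s • w) - g x, w⟫ - β * ‖w‖ ^ 2 * s) s := by
    intro s
    refine ((((hgrad _).hasDerivAt_comp_add_smul).sub (hasDerivAt_mul_const _)).sub
      ((hasDerivAt_pow 2 s).const_mul (β / 2 * ‖w‖ ^ 2))).congr_deriv ?_
    rw [inner_sub_left]
    ring
  have hφ_nonpos : ∀ s ∈ interior (Set.Ici (0 : ℝ)), deriv φ s ≤ 0 := by
    intro s hs
    rw [interior_Ici, Set.mem_Ioi] at hs
    rw [(hφ s).deriv, sub_nonpos]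
    calc ⟪g (x + s • w) - g x, w⟫ ≤ ‖g (x + s • w) - g x‖ * ‖w‖ := real_inner_le_norm _ _
      _ ≤ β * ‖(x + s • w) - x‖ * ‖w‖ := by gcongr; exact hg _ _
      _ = β * ‖w‖ ^ 2 * s := by
        rw [add_sub_cancel_left, norm_smul, Real.norm_of_nonneg hs.le]; ring
  have hφ_anti : AntitoneOn φ (Set.Ici 0) :=
    antitoneOn_of_deriv_nonpos (convex_Ici 0)
      (HasDerivAt.continuousOn fun s _ => hφ s)
      (fun s _ => (hφ s).differentiableAt.differentiableWithinAt) hφ_nonpos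
  have h01 := hφ_anti Set.self_mem_Ici (Set.mem_Ici.mpr zero_le_one) zero_le_one
  simp only [φ, w, zero_smul, one_smul, add_zero, add_sub_cancel, zero_mul, one_mul, sub_zero,
    one_pow, mul_one, ne_eq, OfNat.ofNat_ne_zero, not_false_eq_true, zero_pow] at h01
  linarith

theorem frankWolfe_step_sub_le {g : E → E} {β : ℝ}
    (hf : ConvexOn ℝ Set.univ f) (hgrad : ∀ z, HasGradientAt f (g z) z)
    (hg : ∀ x y, ‖g x - g y‖ ≤ β * ‖x - y‖) (hβ : 0 ≤ β)
    {S : Set E} {D : ℝ} (hD : ∀ u ∈ S, ∀ w ∈ S, ‖u - w‖ ≤ D) {x v y : E}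
    (hy : y ∈ convexHull ℝ S) {η : ℝ} (hη : 0 ≤ η)
    (hv : ∀ u ∈ S, ⟪g x, v⟫ + β * η / 2 * ‖x - v‖ ^ 2 ≤ ⟪g x, u⟫ + β * η / 2 * ‖x - u‖ ^ 2) :
    f ((1 - η) • x + η • v) - f y ≤
      (1 - η) * (f x - f y) + β * η ^ 2 / 2 * (‖x - y‖ ^ 2 + D ^ 2) := by
  have hdesc := le_add_inner_add_sq_of_lipschitz_gradient hgrad hg x ((1 - η) • x + η • v)
  rw [show (1 - η) • x + η • v - x = η • (v - x) by module, real_inner_smul_right,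
    norm_smul, Real.norm_of_nonneg hη, norm_sub_rev, inner_sub_right] at hdesc
  have horacle := le_inner_add_mul_sq_of_mem_convexHull hD hy (by positivity) hv
  have hconv := hf.inner_gradient_le_sub (hgrad x) y
  rw [inner_sub_right] at hconv
  nlinarith [mul_le_mul_of_nonneg_left horacle hη, mul_le_mul_of_nonneg_left hconv hη]

end

theorem le_two_mul_div_of_frankWolfe_recursion {a : ℕ → ℝ} {B : ℝ} (hB : 0 ≤ B)
    (h : ∀ t : ℕ, 1 ≤ t →
      a (t + 1) ≤ (1 - 2 / ((t : ℝ) + 1)) * a t + (2 / ((t : ℝ) + 1)) ^ 2 / 2 * B) :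
    ∀ t : ℕ, 2 ≤ t → a t ≤ 2 * B / ((t : ℝ) + 1) := by
  intro t ht
  induction t, ht using Nat.le_induction with
  | base =>
    have h1 := h 1 le_rfl
    norm_num at h1 ⊢
    linarith
  | succ t ht ih =>
    have ht' : (2 : ℝ) ≤ t := by exact_mod_cast ht
    have hη : 0 ≤ 1 - 2 / ((t : ℝ) + 1) := by
      rw [sub_nonneg, div_le_one (by linarith)]; linarith
    calc a (t + 1) ≤ (1 - 2 / ((t : ℝ) + 1)) * (2 * B / ((t : ℝ) + 1))
          + (2 / ((t : ℝ) + 1)) ^ 2 / 2 * B := by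
          linarith [h t (by omega), mul_le_mul_of_nonneg_left ih hη]
      _ = 2 * B * t / ((t : ℝ) + 1) ^ 2 := by field_simp; ring
      _ ≤ 2 * B / (((t + 1 : ℕ) : ℝ) + 1) := by
          rw [div_le_div_iff₀ (by positivity) (by positivity)]
          push_cast
          nlinarith

theorem fw_nep_rate_general {d : ℕ}
    (K : Set (EuclideanSpace ℝ (Fin d)))
    (V : Set (EuclideanSpace ℝ (Fin d)))
    (f : EuclideanSpace ℝ (Fin d) → ℝ)
    (g : EuclideanSpace ℝ (Fin d) → EuclideanSpace ℝ (Fin d))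
    (hfconv : ConvexOn ℝ Set.univ f)
    (hgrad : ∀ x, HasGradientAt f (g x) x)
    (β : ℝ) (hβ : 0 < β)
    (hsmooth : ∀ x y, ‖g x - g y‖ ≤ β * ‖x - y‖)
    (fstar : ℝ) (hfstar : ∀ x ∈ K, fstar ≤ f x)
    (Xstar : Set (EuclideanSpace ℝ (Fin d)))
    (hXstar : Xstar = {x ∈ K | f x = fstar}) (hXne : Xstar.Nonempty)
    (Sstar : Set (EuclideanSpace ℝ (Fin d))) (hSV : Sstar ⊆ V)
    (hSconv : Xstar ⊆ convexHull ℝ Sstar)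
    (Dstar : ℝ) (hDstar : ∀ u ∈ Sstar, ∀ v ∈ Sstar, ‖u - v‖ ≤ Dstar)
    -- the iterates
    (x v : ℕ → EuclideanSpace ℝ (Fin d))
    (hxK : ∀ t, 1 ≤ t → x t ∈ K)
    (hvopt : ∀ t : ℕ, 1 ≤ t → ∀ u ∈ V,
      ⟪g (x t), v t⟫ + β * (2 / ((t : ℝ) + 1)) / 2 * ‖x t - v t‖ ^ 2
        ≤ ⟪g (x t), u⟫ + β * (2 / ((t : ℝ) + 1)) / 2 * ‖x t - u‖ ^ 2)
    (hdec : ∀ t : ℕ, 1 ≤ t →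
      f (x (t + 1)) ≤
        min (f ((1 - 2 / ((t : ℝ) + 1)) • x t + (2 / ((t : ℝ) + 1)) • v t)) (f (x t)))
    -- diameter of the initial level set
    (DL : ℝ)
    (hDL : ∀ u ∈ {y | y ∈ K ∧ f y ≤ f (x 1)}, ∀ w ∈ {y | y ∈ K ∧ f y ≤ f (x 1)},
      ‖u - w‖ ≤ DL) :
    ∀ t : ℕ, 2 ≤ t →
      f (x t) - fstar ≤ 2 * β * (Dstar ^ 2 + DL ^ 2) / ((t : ℝ) + 1) := by
  obtain ⟨xs, hxs⟩ := hXne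
  have hxs_hull : xs ∈ convexHull ℝ Sstar := hSconv hxs
  rw [hXstar] at hxs
  obtain ⟨hxsK, hxsf⟩ := hxs
  have hlevel : ∀ t, 1 ≤ t → f (x t) ≤ f (x 1) := fun t ht =>
    Nat.rel_of_forall_rel_succ_of_le_of_le (· ≥ ·) (f := fun t => f (x t))
      (fun s hs => (hdec s hs).trans (min_le_right _ _)) le_rfl ht
  have hdist : ∀ t, 1 ≤ t → ‖x t - xs‖ ≤ DL := fun t ht =>
    hDL _ ⟨hxK t ht, hlevel t ht⟩ _ ⟨hxsK, hxsf ▸ hfstar _ (hxK 1 le_rfl)⟩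
  intro t ht
  rw [mul_assoc]
  refine le_two_mul_div_of_frankWolfe_recursion (a := fun t => f (x t) - fstar)
    (by positivity) (fun s hs => ?_) t ht
  set η := 2 / ((s : ℝ) + 1)
  have hdescent := frankWolfe_step_sub_le hfconv hgrad hsmooth hβ.le hDstar hxs_hull
    (η := η) (by positivity) (fun u hu => hvopt s hs u (hSV hu))
  have hdist_sq := pow_le_pow_left₀ (norm_nonneg _) (hdist s hs) 2
  rw [hxsf] at hdescent
  have hfw := (hdec s hs).trans (min_le_left _ _)
  nlinarith [hfw, hdescent, mul_le_mul_of_nonneg_left hdist_sq (by positivity : 0 ≤ β * η ^ 2 / 2)]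

/-- convergence rate of the Frank-Wolfe variant with a nearest
extreme point oracle (first part of Theorem 1 of the paper). -/
theorem fw_nep_rate {d : ℕ}
    (K : Set (EuclideanSpace ℝ (Fin d)))
    (hKconv : Convex ℝ K) (hKcomp : IsCompact K)
    (V : Set (EuclideanSpace ℝ (Fin d))) (hV : V = K.extremePoints ℝ)
    (f : EuclideanSpace ℝ (Fin d) → ℝ)
    (g : EuclideanSpace ℝ (Fin d) → EuclideanSpace ℝ (Fin d))
    (hfconv : ConvexOn ℝ Set.univ f)
    (hgrad : ∀ x, HasGradientAt f (g x) x)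
    (β : ℝ) (hβ : 0 < β)
    (hsmooth : ∀ x y, ‖g x - g y‖ ≤ β * ‖x - y‖)
    (fstar : ℝ) (hfstar : ∀ x ∈ K, fstar ≤ f x)
    (Xstar : Set (EuclideanSpace ℝ (Fin d)))
    (hXstar : Xstar = {x ∈ K | f x = fstar}) (hXne : Xstar.Nonempty)
    (Sstar : Set (EuclideanSpace ℝ (Fin d))) (hSV : Sstar ⊆ V)
    (hSconv : Xstar ⊆ convexHull ℝ Sstar)
    (Dstar : ℝ) (hDstar : ∀ u ∈ Sstar, ∀ v ∈ Sstar, ‖u - v‖ ≤ Dstar)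
    -- the iterates
    (x v : ℕ → EuclideanSpace ℝ (Fin d)) (ηtil : ℕ → ℝ)
    (hx1 : x 1 ∈ V)
    (hxK : ∀ t, 1 ≤ t → x t ∈ K)
    (hvV : ∀ t, 1 ≤ t → v t ∈ V)
    (hvopt : ∀ t : ℕ, 1 ≤ t → ∀ u ∈ V,
      ⟪g (x t), v t⟫ + β * (2 / ((t : ℝ) + 1)) / 2 * ‖x t - v t‖ ^ 2
        ≤ ⟪g (x t), u⟫ + β * (2 / ((t : ℝ) + 1)) / 2 * ‖x t - u‖ ^ 2)
    (hηtil : ∀ t, 1 ≤ t → ηtil t ∈ Set.Icc (0:ℝ) 1)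
    (hstep : ∀ t : ℕ, 1 ≤ t → x (t + 1) = (1 - ηtil t) • x t + ηtil t • v t)
    (hdec : ∀ t : ℕ, 1 ≤ t →
      f (x (t + 1)) ≤
        min (f ((1 - 2 / ((t : ℝ) + 1)) • x t + (2 / ((t : ℝ) + 1)) • v t)) (f (x t)))
    -- diameter of the initial level set
    (DL : ℝ)
    (hDL : ∀ u ∈ {y | y ∈ K ∧ f y ≤ f (x 1)}, ∀ w ∈ {y | y ∈ K ∧ f y ≤ f (x 1)},
      ‖u - w‖ ≤ DL) :
    ∀ t : ℕ, 2 ≤ t →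
      f (x t) - fstar ≤ 2 * β * (Dstar ^ 2 + DL ^ 2) / ((t : ℝ) + 1) :=
  fw_nep_rate_general K V f g hfconv hgrad β hβ hsmooth fstar hfstar Xstar hXstar hXne Sstar hSV
    hSconv Dstar hDstar x v hxK hvopt hdec DL hDL
end

section
/- Let x_t ∈ K, let x* ∈ X* be the point of X* closest to x_t, let g ∈ ℝ^d be arbitrary, let η ∈ [0,1] and β > 0, and let v_t ∈ argmin_{v∈V} ( gᵀv + (βη/2)‖v − x_t‖² ). Then gᵀv_t + (βη/2)‖v_t − x_t‖² ≤ gᵀx* + (βη/2)·min{ (D*)² + dist(x_t, X*)², D_K² }. -/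
open scoped RealInnerProductSpace BigOperators
open Metric

/-!
Since `x*` lies in the convex hull of `S* ⊆ V` and `v_t` minimizes the oracle objective over `V`,
it suffices to find one `u ∈ S*` whose objective is below the right-hand side. Writing
`‖u - x_t‖² = ‖u - x*‖² + 2⟪u - x*, x* - x_t⟫ + ‖x* - x_t‖²`, the objective at `u` is an affine
function of `u` plus `(βη/2) ‖u - x*‖² ≤ (βη/2) (D*)²`, and an affine function attains at some point of `S*`
a value at most its value at `x* ∈ conv S*`. For the bound by `D_K²` one minimizes `⟪g, ·⟫` alone
and uses `‖u - x_t‖ ≤ D_K` on `K`.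
-/

section InnerProductSpace

variable {E : Type*} [NormedAddCommGroup E] [InnerProductSpace ℝ E] {s : Set E} {x : E}

theorem exists_inner_le_of_mem_convexHull (hx : x ∈ convexHull ℝ s) (a : E) :
    ∃ u ∈ s, ⟪a, u⟫ ≤ ⟪a, x⟫ :=
  ((innerₛₗ ℝ a).concaveOn convex_univ).exists_le_of_mem_convexHull (Set.subset_univ _) hx

theorem norm_sub_le_of_mem_convexHull_s11 {D : ℝ} (hD : ∀ u ∈ s, ∀ v ∈ s, ‖u - v‖ ≤ D)
    (hx : x ∈ convexHull ℝ s) {u : E} (hu : u ∈ s) : ‖u - x‖ ≤ D := by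
  obtain ⟨x', hx', hdist⟩ := convexHull_exists_dist_ge hx u
  rw [dist_eq_norm, dist_eq_norm] at hdist
  rw [norm_sub_rev]
  exact hdist.trans (hD x' hx' u hu)

theorem exists_inner_add_mul_sq_norm_le_of_mem_convexHull {D c : ℝ} (hc : 0 ≤ c)
    (hD : ∀ u ∈ s, ∀ v ∈ s, ‖u - v‖ ≤ D) (hx : x ∈ convexHull ℝ s) (g y : E) :
    ∃ u ∈ s, ⟪g, u⟫ + c * ‖u - y‖ ^ 2 ≤ ⟪g, x⟫ + c * (D ^ 2 + ‖x - y‖ ^ 2) := by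
  obtain ⟨u, hu, hlin⟩ := exists_inner_le_of_mem_convexHull hx (g + (2 * c) • (x - y))
  refine ⟨u, hu, ?_⟩
  have hsplit : ‖u - y‖ ^ 2 = ‖u - x‖ ^ 2 + 2 * ⟪u - x, x - y⟫ + ‖x - y‖ ^ 2 := by
    rw [← norm_add_sq_real, sub_add_sub_cancel]
  have hsq : ‖u - x‖ ^ 2 ≤ D ^ 2 :=
    pow_le_pow_left₀ (norm_nonneg _) (norm_sub_le_of_mem_convexHull_s11 hD hx hu) 2
  rw [inner_add_left, inner_add_left, real_inner_smul_left, real_inner_smul_left] at hlin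
  rw [hsplit, real_inner_comm (x - y) (u - x), inner_sub_right]
  linarith [mul_le_mul_of_nonneg_left hsq hc]

end InnerProductSpace

theorem Metric.infDist_eq_dist_of_forall_dist_le {α : Type*} [PseudoMetricSpace α] {s : Set α}
    {x y : α} (hy : y ∈ s) (hmin : ∀ z ∈ s, dist x y ≤ dist x z) : infDist x s = dist x y :=
  le_antisymm (infDist_le_dist_of_mem hy) ((le_infDist ⟨y, hy⟩).2 hmin)

theorem fw_nep_stochastic_key_inequality_general {d : ℕ}
    (K : Set (EuclideanSpace ℝ (Fin d)))
    (V : Set (EuclideanSpace ℝ (Fin d))) (hV : V = K.extremePoints ℝ)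
    (DK : ℝ) (hDK : ∀ u ∈ K, ∀ w ∈ K, ‖u - w‖ ≤ DK)
    (Xstar : Set (EuclideanSpace ℝ (Fin d)))
    (Sstar : Set (EuclideanSpace ℝ (Fin d))) (hSV : Sstar ⊆ V)
    (hSconv : Xstar ⊆ convexHull ℝ Sstar)
    (Dstar : ℝ) (hDstar : ∀ u ∈ Sstar, ∀ v ∈ Sstar, ‖u - v‖ ≤ Dstar)
    (xt : EuclideanSpace ℝ (Fin d)) (hxt : xt ∈ K)
    -- the closest optimal solution to x_t
    (xstar : EuclideanSpace ℝ (Fin d)) (hxstarX : xstar ∈ Xstar)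
    (hxstarclose : ∀ y ∈ Xstar, ‖xt - xstar‖ ≤ ‖xt - y‖)
    -- an arbitrary vector g (e.g. a stochastic gradient estimate)
    (g : EuclideanSpace ℝ (Fin d))
    (η β : ℝ) (hη : η ∈ Set.Icc (0:ℝ) 1) (hβ : 0 < β)
    (vt : EuclideanSpace ℝ (Fin d))
    (hvt : ∀ v ∈ V, ⟪g, vt⟫ + β * η / 2 * ‖vt - xt‖ ^ 2
        ≤ ⟪g, v⟫ + β * η / 2 * ‖v - xt‖ ^ 2) :
    ⟪g, vt⟫ + β * η / 2 * ‖vt - xt‖ ^ 2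
      ≤ ⟪g, xstar⟫ + β * η / 2 * min (Dstar ^ 2 + infDist xt Xstar ^ 2) (DK ^ 2) := by
  have hc : 0 ≤ β * η / 2 := by have := hη.1; positivity
  have hxstar : xstar ∈ convexHull ℝ Sstar := hSconv hxstarX
  have hdist : infDist xt Xstar = ‖xstar - xt‖ := by
    rw [norm_sub_rev, ← dist_eq_norm]
    exact infDist_eq_dist_of_forall_dist_le hxstarX fun y hy => by
      simpa only [dist_eq_norm] using hxstarclose y hy
  rw [mul_min_of_nonneg _ _ hc, add_min, le_min_iff, hdist]
  constructor
  · obtain ⟨u, hu, hle⟩ :=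
      exists_inner_add_mul_sq_norm_le_of_mem_convexHull hc hDstar hxstar g xt
    exact (hvt u (hSV hu)).trans hle
  · obtain ⟨u, hu, hle⟩ := exists_inner_le_of_mem_convexHull hxstar g
    have huK : u ∈ K := (hV ▸ hSV hu).1
    have hsq : ‖u - xt‖ ^ 2 ≤ DK ^ 2 := pow_le_pow_left₀ (norm_nonneg _) (hDK u huK xt hxt) 2
    exact (hvt u (hSV hu)).trans (add_le_add hle (mul_le_mul_of_nonneg_left hsq hc))

/-- the key deterministic inequality for the stochastic
Frank-Wolfe variant with a nearest extreme point oracle. -/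
theorem fw_nep_stochastic_key_inequality {d : ℕ}
    (K : Set (EuclideanSpace ℝ (Fin d)))
    (hKconv : Convex ℝ K) (hKcomp : IsCompact K)
    (V : Set (EuclideanSpace ℝ (Fin d))) (hV : V = K.extremePoints ℝ)
    (DK : ℝ) (hDK : ∀ u ∈ K, ∀ w ∈ K, ‖u - w‖ ≤ DK)
    (f : EuclideanSpace ℝ (Fin d) → ℝ) (hfconv : ConvexOn ℝ Set.univ f)
    (fstar : ℝ) (hfstar : ∀ y ∈ K, fstar ≤ f y)
    (Xstar : Set (EuclideanSpace ℝ (Fin d)))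
    (hXstar : Xstar = {y | y ∈ K ∧ f y = fstar}) (hXne : Xstar.Nonempty)
    (Sstar : Set (EuclideanSpace ℝ (Fin d))) (hSV : Sstar ⊆ V)
    (hSconv : Xstar ⊆ convexHull ℝ Sstar)
    (Dstar : ℝ) (hDstar : ∀ u ∈ Sstar, ∀ v ∈ Sstar, ‖u - v‖ ≤ Dstar)
    (xt : EuclideanSpace ℝ (Fin d)) (hxt : xt ∈ K)
    -- the closest optimal solution to x_t
    (xstar : EuclideanSpace ℝ (Fin d)) (hxstarX : xstar ∈ Xstar)
    (hxstarclose : ∀ y ∈ Xstar, ‖xt - xstar‖ ≤ ‖xt - y‖)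
    -- an arbitrary vector g (e.g. a stochastic gradient estimate)
    (g : EuclideanSpace ℝ (Fin d))
    (η β : ℝ) (hη : η ∈ Set.Icc (0:ℝ) 1) (hβ : 0 < β)
    (vt : EuclideanSpace ℝ (Fin d)) (hvtV : vt ∈ V)
    (hvt : ∀ v ∈ V, ⟪g, vt⟫ + β * η / 2 * ‖vt - xt‖ ^ 2
        ≤ ⟪g, v⟫ + β * η / 2 * ‖v - xt‖ ^ 2) :
    ⟪g, vt⟫ + β * η / 2 * ‖vt - xt‖ ^ 2
      ≤ ⟪g, xstar⟫ + β * η / 2 * min (Dstar ^ 2 + infDist xt Xstar ^ 2) (DK ^ 2) :=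
  fw_nep_stochastic_key_inequality_general K V hV DK hDK Xstar Sstar hSV hSconv Dstar hDstar xt hxt
    xstar hxstarX hxstarclose g η β hη hβ vt hvt
end
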